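/- arXiv:1911.07697 — 5 statements merged into one kernel-verified Lean document; each statement's English description precedes it below -/
import Mathlib

section
/- If a finite point set P ⊂ ℝ² is covered by ℓ ≥ 1 lines, then P can be covered by at most ℓ² closed segments (points allowed as degenerate segments) whose relative interiors are pairwise disjoint. -/
open Set

noncomputable section
namespace NCSC

def phi (a b : ℝ × ℝ) (t : ℝ) : ℝ × ℝ := a + t • b

lemma phi_inj {a b : ℝ × ℝ} (hb : b ≠ 0) : Function.Injective (phi a b) := by
  intro t t' h
  have h2 : t • b = t' • b := add_left_cancel h
  by_contra hne
  have := sub_eq_zero.mpr h2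
  rw [← sub_smul] at this
  exact hb ((smul_eq_zero.mp this).resolve_left (sub_ne_zero.mpr hne))

lemma phi_eval (a b : ℝ × ℝ) (s r : ℝ) : phi a b (s + r) = phi a b s + r • b := by
  simp [phi, add_smul]; module

lemma phi_affine (a b : ℝ × ℝ) :
    phi a b = fun t => (AffineMap.lineMap a (a + b) : ℝ →ᵃ[ℝ] ℝ × ℝ) t := by
  funext t
  simp [phi, AffineMap.lineMap_apply, smul_sub, smul_add]
  module

lemma phi_image_segment (a b : ℝ × ℝ) (c d : ℝ) :
    phi a b '' segment ℝ c d = segment ℝ (phi a b c) (phi a b d) := by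
  rw [phi_affine]; exact image_segment ℝ (AffineMap.lineMap a (a+b)) c d

lemma phi_image_openSegment (a b : ℝ × ℝ) (c d : ℝ) :
    phi a b '' openSegment ℝ c d = openSegment ℝ (phi a b c) (phi a b d) := by
  rw [phi_affine]; exact image_openSegment ℝ (AffineMap.lineMap a (a+b)) c d

lemma range_phi_eq {a b : ℝ × ℝ} {x y : ℝ × ℝ} {s u : ℝ}
    (hx : phi a b s = x) (hy : phi a b u = y) (hsu : s ≠ u) :
    Set.range (phi a b) = Set.range (phi x (y - x)) := by
  subst hx; subst hy
  have hyx : phi a b u - phi a b s = (u - s) • b := by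
    simp only [phi]; rw [sub_smul]; abel
  have hkey : ∀ r : ℝ, phi (phi a b s) (phi a b u - phi a b s) r = phi a b (s + r * (u - s)) := by
    intro r
    rw [phi_eval, hyx]
    simp only [phi, smul_smul, add_smul]
  ext z
  constructor
  · rintro ⟨t, rfl⟩
    refine ⟨(t - s) / (u - s), ?_⟩
    rw [hkey, div_mul_cancel₀ _ (sub_ne_zero.mpr (Ne.symm hsu))]
    ring_nf
  · rintro ⟨r, rfl⟩
    exact ⟨s + r * (u - s), (hkey r).symm⟩

lemma line_unique {a b a' b' : ℝ × ℝ} {x y : ℝ × ℝ} (hxy : x ≠ y)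
    (hx1 : x ∈ Set.range (phi a b)) (hy1 : y ∈ Set.range (phi a b))
    (hx2 : x ∈ Set.range (phi a' b')) (hy2 : y ∈ Set.range (phi a' b')) :
    Set.range (phi a b) = Set.range (phi a' b') := by
  obtain ⟨s, hs⟩ := hx1; obtain ⟨u, hu⟩ := hy1
  obtain ⟨s', hs'⟩ := hx2; obtain ⟨u', hu'⟩ := hy2
  have hsu : s ≠ u := by rintro rfl; exact hxy (hs ▸ hu ▸ rfl)
  have hsu' : s' ≠ u' := by rintro rfl; exact hxy (hs' ▸ hu' ▸ rfl)
  rw [range_phi_eq hs hu hsu, range_phi_eq hs' hu' hsu']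

theorem main (P : Set (ℝ × ℝ)) (hP : P.Finite) (ℓ : ℕ) (hℓ : 1 ≤ ℓ)
    (a b : Fin ℓ → ℝ × ℝ) (hb : ∀ i, b i ≠ 0)
    (hcov : P ⊆ ⋃ i, Set.range (phi (a i) (b i))) :
    ∃ (m : ℕ) (g : Fin m → (ℝ × ℝ) × (ℝ × ℝ)), m ≤ ℓ ^ 2 ∧
      P ⊆ (⋃ i, segment ℝ (g i).1 (g i).2) ∧
      ∀ i j, i ≠ j →
        Disjoint (openSegment ℝ (g i).1 (g i).2) (openSegment ℝ (g j).1 (g j).2) := by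
  classical
  set L : Fin ℓ → Set (ℝ × ℝ) := fun i => Set.range (phi (a i) (b i)) with hLdef
  -- representatives
  have hfilne : ∀ i, (Finset.univ.filter (fun j => L j = L i)).Nonempty :=
    fun i => ⟨i, by simp⟩
  set rep : Fin ℓ → Fin ℓ :=
    fun i => (Finset.univ.filter (fun j => L j = L i)).min' (hfilne i) with hrepdef
  have hLrep : ∀ i, L (rep i) = L i := fun i => by
    have := Finset.min'_mem _ (hfilne i)
    simpa using this
  have hrep_eq : ∀ i j, L i = L j → rep i = rep j := by
    intro i j h
    simp only [hrepdef, h]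
  have hreprep : ∀ i, rep (rep i) = rep i := fun i => hrep_eq _ _ (hLrep i)
  -- parameter of a point on a line
  set tau : Fin ℓ → (ℝ × ℝ) → ℝ :=
    fun i x => if h : x ∈ L i then h.choose else 0 with htaudef
  have htau : ∀ i x, (h : x ∈ L i) → phi (a i) (b i) (tau i x) = x := by
    intro i x h
    simp only [htaudef, dif_pos h]
    exact h.choose_spec
  -- finite parameter sets
  have hPfin : ∀ i, (phi (a i) (b i) ⁻¹' P).Finite :=
    fun i => hP.preimage (phi_inj (hb i)).injOn
  -- crossing parameters
  set Tf : Fin ℓ → Fin ℓ → Finset ℝ := fun i j =>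
    if h : L j ≠ L i ∧ ∃ t, phi (a i) (b i) t ∈ L j then {h.2.choose} else ∅ with hTfdef
  have hTf_card : ∀ i j, (Tf i j).card ≤ 1 := by
    intro i j
    simp only [hTfdef]
    split <;> simp
  have hTf_mem : ∀ i j t, L j ≠ L i → phi (a i) (b i) t ∈ L j → t ∈ Tf i j := by
    intro i j t hne ht
    have hex : ∃ t, phi (a i) (b i) t ∈ L j := ⟨t, ht⟩
    simp only [hTfdef, dif_pos (And.intro hne hex)]
    rw [Finset.mem_singleton]
    by_contra htc
    have ht' : phi (a i) (b i) hex.choose ∈ L j := hex.choose_spec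
    have hxy : phi (a i) (b i) t ≠ phi (a i) (b i) hex.choose :=
      fun h => htc (phi_inj (hb i) h)
    exact hne.symm (line_unique hxy ⟨t, rfl⟩ ⟨hex.choose, rfl⟩ ht ht')
  set G : Fin ℓ → Finset ℝ := fun i => (Finset.univ.erase i).biUnion (Tf i) with hGdef
  have hG_card : ∀ i, (G i).card ≤ ℓ - 1 := by
    intro i
    calc (G i).card ≤ ∑ j ∈ Finset.univ.erase i, (Tf i j).card := Finset.card_biUnion_le
    _ ≤ ∑ _j ∈ Finset.univ.erase i, 1 := Finset.sum_le_sum (fun j _ => hTf_card i j)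
    _ = ℓ - 1 := by simp
  have hG_mem : ∀ i j t, L j ≠ L i → phi (a i) (b i) t ∈ L j → t ∈ G i := by
    intro i j t h ht
    refine Finset.mem_biUnion.mpr ⟨j, ?_, hTf_mem i j t h ht⟩
    refine Finset.mem_erase.mpr ⟨?_, Finset.mem_univ _⟩
    rintro rfl; exact h rfl
  -- bounds
  set base : Fin ℓ → Finset ℝ :=
    fun i => (G i ∪ (hPfin i).toFinset) ∪ {0} with hbasedef
  have hbne : ∀ i, (base i).Nonempty := fun i => ⟨0, by simp [hbasedef]⟩
  set u : Fin ℓ → ℝ := fun i => (base i).min' (hbne i) - 1 with hudef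
  set v : Fin ℓ → ℝ := fun i => (base i).max' (hbne i) + 1 with hvdef
  have hbound : ∀ i t, t ∈ base i → u i < t ∧ t < v i := by
    intro i t ht
    have h1 := Finset.min'_le _ t ht
    have h2 := Finset.le_max' _ t ht
    constructor
    · simp only [hudef]; linarith
    · simp only [hvdef]; linarith
  have huv : ∀ i, u i < v i := by
    intro i
    have h1 := (hbound i _ (Finset.min'_mem _ (hbne i))).1
    have h2 := (hbound i _ (Finset.min'_mem _ (hbne i))).2
    linarith
  set D : Fin ℓ → Finset ℝ := fun i => insert (u i) (insert (v i) (G i)) with hDdef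
  have hGD : ∀ i, G i ⊆ D i := by
    intro i t ht
    simp only [hDdef, Finset.mem_insert]
    tauto
  have huD : ∀ i, u i ∈ D i := fun i => Finset.mem_insert_self _ _
  have hvD : ∀ i, v i ∈ D i := fun i => Finset.mem_insert.mpr (Or.inr (Finset.mem_insert_self _ _))
  have hu_le : ∀ i t, t ∈ D i → u i ≤ t := by
    intro i t ht
    simp only [hDdef, Finset.mem_insert] at ht
    rcases ht with rfl | rfl | h
    · exact le_refl _
    · exact (huv i).le
    · exact (hbound i t (by simp [hbasedef, h])).1.le
  have hle_v : ∀ i t, t ∈ D i → t ≤ v i := by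
    intro i t ht
    simp only [hDdef, Finset.mem_insert] at ht
    rcases ht with rfl | rfl | h
    · exact (huv i).le
    · exact le_refl _
    · exact (hbound i t (by simp [hbasedef, h])).2.le
  set k : Fin ℓ → ℕ := fun i => (D i).card with hkdef
  have hk2 : ∀ i, 2 ≤ k i := by
    intro i
    have : ({u i, v i} : Finset ℝ) ⊆ D i := by
      intro t ht
      simp only [Finset.mem_insert, Finset.mem_singleton] at ht
      rcases ht with rfl | rfl
      exacts [huD i, hvD i]
    have hcard : ({u i, v i} : Finset ℝ).card = 2 :=
      Finset.card_pair (huv i).ne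
    have := Finset.card_le_card this
    simp only [hkdef]
    omega
  have hkℓ : ∀ i, k i ≤ ℓ + 1 := by
    intro i
    have h1 : (D i).card ≤ (G i).card + 2 := by
      have ha := Finset.card_insert_le (u i) (insert (v i) (G i))
      have hb2 := Finset.card_insert_le (v i) (G i)
      simp only [hDdef]
      omega
    have := hG_card i
    simp only [hkdef]
    omega
  -- enumeration of D i
  set e : ∀ i : Fin ℓ, Fin (k i) → ℝ :=
    fun i r => (((D i).orderIsoOfFin rfl) r : ℝ) with hedef
  have hemono : ∀ i, StrictMono (e i) := by
    intro i r r' h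
    have := ((D i).orderIsoOfFin rfl).strictMono h
    exact this
  have heD : ∀ i r, e i r ∈ D i := fun i r => (((D i).orderIsoOfFin rfl) r).2
  have hesurj : ∀ i t, t ∈ D i → ∃ r, e i r = t := by
    intro i t ht
    exact ⟨((D i).orderIsoOfFin rfl).symm ⟨t, ht⟩, by
      simp only [hedef, OrderIso.apply_symm_apply]⟩
  -- no element of D i lies strictly between consecutive enumeration values
  have hnotIoo : ∀ i (r : ℕ) (hr : r + 1 < k i) t, t ∈ D i →
      t ∉ Set.Ioo (e i ⟨r, by omega⟩) (e i ⟨r + 1, hr⟩) := by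
    intro i r hr t ht hmem
    obtain ⟨j, rfl⟩ := hesurj i t ht
    rcases le_or_gt (j : ℕ) r with hj | hj
    · have : e i j ≤ e i ⟨r, by omega⟩ := (hemono i).monotone (by exact hj)
      exact absurd hmem.1 (not_lt.mpr this)
    · have : e i ⟨r + 1, hr⟩ ≤ e i j := (hemono i).monotone (by exact hj)
      exact absurd hmem.2 (not_lt.mpr this)
  -- dummy points
  obtain ⟨c, hc⟩ : ∃ c : ℝ, ∀ i, c ≠ (a i).1 := by
    obtain ⟨c, hc⟩ := Infinite.exists_notMem_finset (Finset.univ.image (fun i => (a i).1))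
    exact ⟨c, fun i hci => hc (Finset.mem_image.mpr ⟨i, Finset.mem_univ _, hci.symm⟩)⟩
  set V : Set ℝ := {y | ∃ i, (c, y) ∈ L i} with hVdef
  have hVfin : V.Finite := by
    have hsub : V ⊆ ⋃ i, {y | (c, y) ∈ L i} := by
      rintro y ⟨i, hy⟩
      exact Set.mem_iUnion.mpr ⟨i, hy⟩
    refine Set.Finite.subset (Set.finite_iUnion fun i => ?_) hsub
    apply Set.Subsingleton.finite
    rintro y ⟨t, ht⟩ y' ⟨t', ht'⟩
    have h1 : (a i).1 + t * (b i).1 = c := congrArg Prod.fst ht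
    have h1' : (a i).1 + t' * (b i).1 = c := congrArg Prod.fst ht'
    have h2 : (a i).2 + t * (b i).2 = y := congrArg Prod.snd ht
    have h2' : (a i).2 + t' * (b i).2 = y' := congrArg Prod.snd ht'
    rcases eq_or_ne (b i).1 0 with hb1 | hb1
    · rw [hb1] at h1; simp at h1
      exact absurd h1.symm (hc i)
    · have htt : t = t' := by
        have : t * (b i).1 = t' * (b i).1 := by linarith
        exact mul_right_cancel₀ hb1 this
      rw [← h2, ← h2', htt]
  have hVc : (Vᶜ : Set ℝ).Infinite := hVfin.infinite_compl
  set emb : ℕ ↪ ↥(Vᶜ) := Set.Infinite.natEmbedding _ hVc with hembdef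
  set dum : Fin ℓ × Fin ℓ → ℝ × ℝ :=
    fun p => (c, (emb ((finProdFinEquiv p : Fin (ℓ * ℓ)) : ℕ) : ℝ)) with hdumdef
  have hdum_inj : ∀ p q, dum p = dum q → p = q := by
    intro p q h
    have h2 : (emb ((finProdFinEquiv p : Fin (ℓ * ℓ)) : ℕ) : ℝ) =
        (emb ((finProdFinEquiv q : Fin (ℓ * ℓ)) : ℕ) : ℝ) := congrArg Prod.snd h
    have h3 := emb.injective (Subtype.ext h2)
    have h4 : (finProdFinEquiv p : Fin (ℓ * ℓ)) = finProdFinEquiv q := Fin.ext h3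
    exact finProdFinEquiv.injective h4
  have hdum_not : ∀ p i, dum p ∉ L i := by
    intro p i hmem
    have : ((emb ((finProdFinEquiv p : Fin (ℓ * ℓ)) : ℕ) : ℝ)) ∈ V := ⟨i, hmem⟩
    exact (emb ((finProdFinEquiv p : Fin (ℓ * ℓ)) : ℕ)).2 this
  -- the segments
  set g' : Fin ℓ × Fin ℓ → (ℝ × ℝ) × (ℝ × ℝ) := fun p =>
    if h : rep p.1 = p.1 ∧ (p.2 : ℕ) + 1 < k p.1 then
      (phi (a p.1) (b p.1) (e p.1 ⟨(p.2 : ℕ), Nat.lt_of_succ_lt h.2⟩),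
       phi (a p.1) (b p.1) (e p.1 ⟨(p.2 : ℕ) + 1, h.2⟩))
    else (dum p, dum p) with hg'def
  have hm : ℓ ^ 2 = ℓ * ℓ := sq ℓ
  set E : Fin (ℓ ^ 2) ≃ Fin ℓ × Fin ℓ := (finCongr hm).trans finProdFinEquiv.symm with hEdef
  refine ⟨ℓ ^ 2, fun q => g' (E q), le_refl _, ?_, ?_⟩
  · -- coverage
    intro x hx
    obtain ⟨j, hxj⟩ := Set.mem_iUnion.mp (hcov hx)
    set i := rep j with hidef
    have hxi : x ∈ L i := by rw [hidef, hLrep j]; exact hxj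
    set t := tau i x with htdef
    have hphit : phi (a i) (b i) t = x := htau i x hxi
    have htP : t ∈ base i := by
      simp only [hbasedef, Finset.mem_union, Finset.mem_singleton]
      left; right
      rw [Set.Finite.mem_toFinset]
      show phi (a i) (b i) t ∈ P
      rw [hphit]; exact hx
    have h1 : u i < t := (hbound i t htP).1
    have h2 : t < v i := (hbound i t htP).2
    -- bracket
    have hA : (Finset.univ.filter (fun r : Fin (k i) => e i r ≤ t)).Nonempty := by
      obtain ⟨r0, hr0⟩ := hesurj i (u i) (huD i)
      exact ⟨r0, by simp [hr0, h1.le]⟩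
    set rmax := (Finset.univ.filter (fun r : Fin (k i) => e i r ≤ t)).max' hA with hrmaxdef
    have hrmax_le : e i rmax ≤ t := by
      have := Finset.max'_mem _ hA
      simpa using this
    have hrmax_max : ∀ r : Fin (k i), e i r ≤ t → r ≤ rmax := by
      intro r hr
      exact Finset.le_max' _ r (by simp [hr])
    have hlt : (rmax : ℕ) + 1 < k i := by
      by_contra hcon
      obtain ⟨rv, hrv⟩ := hesurj i (v i) (hvD i)
      have hrvle : rv ≤ rmax := by
        have : (rv : ℕ) < k i := rv.2
        have : (rv : ℕ) ≤ (rmax : ℕ) := by omega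
        exact this
      have : e i rv ≤ e i rmax := (hemono i).monotone hrvle
      rw [hrv] at this
      linarith
    have hnext : t ≤ e i ⟨(rmax : ℕ) + 1, hlt⟩ := by
      by_contra hcon
      push_neg at hcon
      have := hrmax_max ⟨(rmax : ℕ) + 1, hlt⟩ hcon.le
      simp only [Fin.le_def] at this
      omega
    -- build the index
    have hrℓ : (rmax : ℕ) < ℓ := by
      have := hkℓ i
      omega
    set p : Fin ℓ × Fin ℓ := (i, ⟨(rmax : ℕ), hrℓ⟩) with hpdef
    have hcond : rep p.1 = p.1 ∧ (p.2 : ℕ) + 1 < k p.1 := ⟨hreprep j, hlt⟩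
    have hgp : g' p = (phi (a i) (b i) (e i ⟨(rmax : ℕ), Nat.lt_of_succ_lt hlt⟩),
        phi (a i) (b i) (e i ⟨(rmax : ℕ) + 1, hlt⟩)) := by
      simp only [hg'def]
      rw [dif_pos hcond]
    refine Set.mem_iUnion.mpr ⟨E.symm p, ?_⟩
    simp only [Equiv.apply_symm_apply]
    rw [hgp]
    dsimp only
    rw [← phi_image_segment]
    refine ⟨t, ?_, hphit⟩
    rw [segment_eq_Icc ((hemono i).monotone (by simp [Fin.le_def]))]
    exact ⟨hrmax_le, hnext⟩
  · -- disjointness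
    have main : ∀ p p' : Fin ℓ × Fin ℓ, p ≠ p' →
        Disjoint (openSegment ℝ (g' p).1 (g' p).2) (openSegment ℝ (g' p').1 (g' p').2) := by
      have hopen : ∀ p : Fin ℓ × Fin ℓ, (h : rep p.1 = p.1 ∧ (p.2 : ℕ) + 1 < k p.1) →
          openSegment ℝ (g' p).1 (g' p).2 =
            phi (a p.1) (b p.1) ''
              Set.Ioo (e p.1 ⟨(p.2 : ℕ), Nat.lt_of_succ_lt h.2⟩) (e p.1 ⟨(p.2 : ℕ) + 1, h.2⟩) := by
        intro p h
        have hgp : g' p = (phi (a p.1) (b p.1) (e p.1 ⟨(p.2 : ℕ), Nat.lt_of_succ_lt h.2⟩),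
            phi (a p.1) (b p.1) (e p.1 ⟨(p.2 : ℕ) + 1, h.2⟩)) := by
          simp only [hg'def]; rw [dif_pos h]
        rw [hgp]
        dsimp only
        rw [← phi_image_openSegment, openSegment_eq_Ioo
          (hemono p.1 (by simp [Fin.lt_def]))]
      have hdum_eq : ∀ p : Fin ℓ × Fin ℓ, ¬(rep p.1 = p.1 ∧ (p.2 : ℕ) + 1 < k p.1) →
          openSegment ℝ (g' p).1 (g' p).2 = {dum p} := by
        intro p h
        have hgp : g' p = (dum p, dum p) := by simp only [hg'def]; rw [dif_neg h]
        rw [hgp]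
        dsimp only
        exact openSegment_same ℝ _
      rintro ⟨i, r⟩ ⟨i', r'⟩ hpp'
      by_cases h : rep i = i ∧ (r : ℕ) + 1 < k i <;>
        by_cases h' : rep i' = i' ∧ (r' : ℕ) + 1 < k i'
      · -- both real
        rw [hopen (i, r) h, hopen (i', r') h']
        rcases eq_or_ne i i' with rfl | h1
        · -- same line, different pieces
          have h2 : (r : ℕ) ≠ (r' : ℕ) := by
            intro hval
            exact hpp' (by rw [Fin.ext hval])
          rw [Set.disjoint_left]
          rintro z ⟨t1, ht1, rfl⟩ ⟨t2, ht2, hz⟩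
          have htt : t2 = t1 := phi_inj (hb i) hz
          subst htt
          rcases Nat.lt_or_ge (r : ℕ) (r' : ℕ) with hlt | hge
          · have : e i ⟨(r : ℕ) + 1, h.2⟩ ≤ e i ⟨(r' : ℕ), Nat.lt_of_succ_lt h'.2⟩ :=
              (hemono i).monotone (by simp only [Fin.le_def]; omega)
            have hx1 := ht1.2
            have hx2 := ht2.1
            linarith
          · have hge' : (r' : ℕ) < (r : ℕ) := by omega
            have : e i ⟨(r' : ℕ) + 1, h'.2⟩ ≤ e i ⟨(r : ℕ), Nat.lt_of_succ_lt h.2⟩ :=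
              (hemono i).monotone (by simp only [Fin.le_def]; omega)
            have hx1 := ht1.1
            have hx2 := ht2.2
            linarith
        · -- different lines
          have hLL : L i' ≠ L i := by
            intro hL
            have hre := hrep_eq i' i hL
            rw [h.1, h'.1] at hre
            exact h1 hre.symm
          rw [Set.disjoint_left]
          rintro z ⟨t1, ht1, rfl⟩ ⟨t2, ht2, hz⟩
          have hmem : phi (a i) (b i) t1 ∈ L i' := ⟨t2, hz⟩
          have hG1 : t1 ∈ G i := hG_mem i i' t1 hLL hmem
          exact hnotIoo i (r : ℕ) h.2 t1 (hGD i hG1) ht1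
      · -- real / dummy
        rw [hopen (i, r) h, hdum_eq (i', r') h']
        rw [Set.disjoint_singleton_right]
        rintro ⟨t1, ht1, hz⟩
        exact hdum_not (i', r') i ⟨t1, hz⟩
      · -- dummy / real
        rw [hdum_eq (i, r) h, hopen (i', r') h']
        rw [Set.disjoint_left]
        rintro z hz ⟨t2, ht2, hz2⟩
        rw [Set.mem_singleton_iff] at hz
        subst hz
        exact hdum_not (i, r) i' ⟨t2, hz2⟩
      · -- both dummy
        rw [hdum_eq (i, r) h, hdum_eq (i', r') h']
        rw [Set.disjoint_singleton]
        intro hd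
        exact hpp' (hdum_inj _ _ hd)
    intro q q' hqq'
    exact main (E q) (E q') (fun hEq => hqq' (E.injective hEq))

end NCSC
end

/-- If a finite point set `P ⊂ ℝ²` is covered by `ℓ ≥ 1` lines, then `P` can be
covered by at most `ℓ²` closed segments (points allowed as degenerate segments)
whose relative interiors are pairwise disjoint. -/
theorem line_cover_to_noncrossing_segment_cover
    (P : Set (ℝ × ℝ)) (hP : P.Finite) (ℓ : ℕ) (hℓ : 1 ≤ ℓ)
    (a b : Fin ℓ → ℝ × ℝ) (hb : ∀ i, b i ≠ 0)
    (hcov : P ⊆ ⋃ i, {x : ℝ × ℝ | ∃ t : ℝ, x = a i + t • b i}) :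
    ∃ (m : ℕ) (g : Fin m → (ℝ × ℝ) × (ℝ × ℝ)), m ≤ ℓ ^ 2 ∧
      P ⊆ (⋃ i, segment ℝ (g i).1 (g i).2) ∧
      ∀ i j, i ≠ j →
        Disjoint (openSegment ℝ (g i).1 (g i).2) (openSegment ℝ (g j).1 (g j).2) := by
  apply NCSC.main P hP ℓ hℓ a b hb
  have : ∀ i : Fin ℓ, {x : ℝ × ℝ | ∃ t : ℝ, x = a i + t • b i} = Set.range (NCSC.phi (a i) (b i)) := by
    intro i
    ext x
    constructor
    · rintro ⟨t, rfl⟩; exact ⟨t, rfl⟩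
    · rintro ⟨t, rfl⟩; exact ⟨t, rfl⟩
  simpa only [this] using hcov
end

section
/- Let S ⊂ ℝ² be a compact convex set contained in the horizontal strip {(x,y) : −1 ≤ y ≤ 1}, and suppose the intersection of S with the x-axis is a segment of length at most ε > 0. Then min( area(S ∩ {y ≥ 0}), area(S ∩ {y ≤ 0}) ) ≤ ε. -/
/-!
If both halves had area greater than `ε`, then by Fubini some horizontal slice at a height
`s ∈ [0, 1]` and some slice at a height `t ∈ [-1, 0]` would both be longer than `ε`. Writing
`0 = a t + b s` as a convex combination, convexity puts `a • slice t + b • slice s` inside the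
slice at height `0`, and by the one-dimensional Brunn–Minkowski inequality this set is at least
`a |slice t| + b |slice s| > ε` long, contradicting the hypothesis on the axis.
-/

open MeasureTheory Set
open scoped Pointwise ENNReal

def Set.slice {α β : Type*} (S : Set (α × β)) (b : β) : Set α := (·, b) ⁻¹' S

theorem IsCompact.slice {α β : Type*} [TopologicalSpace α] [TopologicalSpace β] [T1Space β]
    {S : Set (α × β)} (hS : IsCompact S) (b : β) : IsCompact (S.slice b) :=
  (Topology.IsClosedEmbedding.of_continuous_injective_isClosedMap (.prodMk_left b)
    (Prod.mk_left_injective b) (isClosedMap_prodMk_right b)).isCompact_preimage hS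

theorem Convex.smul_slice_add_smul_slice_subset {𝕜 E F : Type*} [Semiring 𝕜] [PartialOrder 𝕜]
    [AddCommMonoid E] [AddCommMonoid F] [Module 𝕜 E] [Module 𝕜 F] {S : Set (E × F)}
    (hS : Convex 𝕜 S) {y₁ y₂ : F} {a b : 𝕜} (ha : 0 ≤ a) (hb : 0 ≤ b) (hab : a + b = 1) :
    a • S.slice y₁ + b • S.slice y₂ ⊆ S.slice (a • y₁ + b • y₂) := by
  rintro _ ⟨_, ⟨x₁, hx₁, rfl⟩, _, ⟨x₂, hx₂, rfl⟩, rfl⟩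
  exact hS hx₁ hx₂ ha hb hab

theorem Real.volume_add_volume_le_volume_add {E F : Set ℝ} (hE : IsCompact E) (hF : IsCompact F)
    (hE₀ : E.Nonempty) (hF₀ : F.Nonempty) : volume E + volume F ≤ volume (E + F) := by
  set e := sSup E
  set f := sInf F
  -- The translates `E + f` and `e + F` lie in `E + F` and meet at most in the point `e + f`.
  have hleft : E + {f} ⊆ Iic (e + f) := by
    rintro _ ⟨x, hx, _, rfl, rfl⟩
    exact add_le_add_left (le_csSup hE.bddAbove hx) f
  have hright : {e} + F ⊆ Ici (e + f) := by
    rintro _ ⟨_, rfl, x, hx, rfl⟩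
    exact add_le_add_right (csInf_le hF.bddBelow hx) e
  have hdisj : AEDisjoint volume (E + {f}) ({e} + F) :=
    measure_mono_null (fun x hx => le_antisymm (hleft hx.1) (hright hx.2)) Real.volume_singleton
  have hsub : E + {f} ∪ ({e} + F) ⊆ E + F :=
    union_subset (add_subset_add_left (singleton_subset_iff.2 (hF.sInf_mem hF₀)))
      (add_subset_add_right (singleton_subset_iff.2 (hE.sSup_mem hE₀)))
  calc volume E + volume F = volume (E + {f}) + volume ({e} + F) := by
        rw [add_singleton, singleton_add, image_add_right, image_add_left,
          measure_preimage_add_right, measure_preimage_add]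
    _ = volume (E + {f} ∪ ({e} + F)) :=
        (measure_union₀ (isCompact_singleton.add hF).measurableSet.nullMeasurableSet hdisj).symm
    _ ≤ volume (E + F) := measure_mono hsub

theorem Convex.min_volume_slice_le {F : Type*} [TopologicalSpace F] [T1Space F]
    [AddCommMonoid F] [Module ℝ F] {S : Set (ℝ × F)} (hS : Convex ℝ S) (hS' : IsCompact S)
    {y₁ y₂ : F} {a b : ℝ} (ha : 0 ≤ a) (hb : 0 ≤ b) (hab : a + b = 1) :
    min (volume (S.slice y₁)) (volume (S.slice y₂)) ≤ volume (S.slice (a • y₁ + b • y₂)) := by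
  rcases (S.slice y₁).eq_empty_or_nonempty with h₁ | h₁
  · simp [h₁]
  rcases (S.slice y₂).eq_empty_or_nonempty with h₂ | h₂
  · simp [h₂]
  set m := min (volume (S.slice y₁)) (volume (S.slice y₂))
  calc m = ENNReal.ofReal a * m + ENNReal.ofReal b * m := by
        rw [← add_mul, ← ENNReal.ofReal_add ha hb, hab, ENNReal.ofReal_one, one_mul]
    _ ≤ ENNReal.ofReal a * volume (S.slice y₁) + ENNReal.ofReal b * volume (S.slice y₂) := by
        gcongr
        exacts [min_le_left _ _, min_le_right _ _]
    _ = volume (a • S.slice y₁) + volume (b • S.slice y₂) := by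
        simp only [Measure.addHaar_smul_of_nonneg _ ha, Measure.addHaar_smul_of_nonneg _ hb,
          Module.finrank_self, pow_one]
    _ ≤ volume (a • S.slice y₁ + b • S.slice y₂) :=
        Real.volume_add_volume_le_volume_add ((hS'.slice y₁).smul a) ((hS'.slice y₂).smul b)
          h₁.smul_set h₂.smul_set
    _ ≤ volume (S.slice (a • y₁ + b • y₂)) :=
        measure_mono (hS.smul_slice_add_smul_slice_subset ha hb hab)

theorem MeasureTheory.Measure.exists_lt_measure_slice {α β : Type*} [MeasurableSpace α]
    [MeasurableSpace β] {μ : Measure α} {ν : Measure β} [SFinite μ] [SFinite ν] {T : Set (α × β)}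
    (hT : MeasurableSet T) {I : Set β} (hI : MeasurableSet I) (hTI : ∀ p ∈ T, p.2 ∈ I) {c : ℝ≥0∞}
    (h : c * ν I < μ.prod ν T) :
    ∃ y ∈ I, c < μ (T.slice y) := by
  by_contra! hle
  refine h.not_ge ?_
  rw [prod_apply_symm hT, ← lintegral_indicator_const hI]
  refine lintegral_mono fun y => ?_
  by_cases hy : y ∈ I
  · rw [indicator_of_mem hy]
    exact hle y hy
  · have : T.slice y = ∅ := eq_empty_of_forall_notMem fun x hx => hy (hTI _ hx)
    rw [indicator_of_notMem hy]
    exact (measure_mono_null this.subset measure_empty).le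

theorem convex_through_narrow_gap_general
    (S : Set (ℝ × ℝ)) (hcpt : IsCompact S) (hconv : Convex ℝ S)
    (hstrip : ∀ p ∈ S, -1 ≤ p.2 ∧ p.2 ≤ 1)
    (ε : ℝ)
    (hlen : volume {x : ℝ | (x, (0 : ℝ)) ∈ S} ≤ ENNReal.ofReal ε) :
    min (volume {p ∈ S | 0 ≤ p.2}) (volume {p ∈ S | p.2 ≤ 0}) ≤ ENNReal.ofReal ε := by
  by_contra! h
  rw [lt_min_iff, Measure.volume_eq_prod] at h
  have hS := hcpt.measurableSet
  obtain ⟨s, hs, hεs⟩ : ∃ s ∈ Icc (0 : ℝ) 1, ENNReal.ofReal ε < volume (S.slice s) := by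
    obtain ⟨s, hs, hlt⟩ := Measure.exists_lt_measure_slice (μ := volume) (ν := volume)
      (T := {p ∈ S | 0 ≤ p.2}) (I := Icc 0 1) (c := ENNReal.ofReal ε)
      (hS.inter (measurableSet_le measurable_const measurable_snd)) measurableSet_Icc
      (fun p hp => ⟨hp.2, (hstrip p hp.1).2⟩) (by simpa using h.1)
    exact ⟨s, hs, hlt.trans_le (measure_mono fun x hx => hx.1)⟩
  obtain ⟨t, ht, hεt⟩ : ∃ t ∈ Icc (-1 : ℝ) 0, ENNReal.ofReal ε < volume (S.slice t) := by
    obtain ⟨t, ht, hlt⟩ := Measure.exists_lt_measure_slice (μ := volume) (ν := volume)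
      (T := {p ∈ S | p.2 ≤ 0}) (I := Icc (-1) 0) (c := ENNReal.ofReal ε)
      (hS.inter (measurableSet_le measurable_snd measurable_const)) measurableSet_Icc
      (fun p hp => ⟨(hstrip p hp.1).1, hp.2⟩) (by simpa using h.2)
    exact ⟨t, ht, hlt.trans_le (measure_mono fun x hx => hx.1)⟩
  obtain ⟨a, b, ha, hb, hab, h0⟩ : (0 : ℝ) ∈ segment ℝ t s := by
    rw [segment_eq_Icc (ht.2.trans hs.1)]
    exact ⟨ht.2, hs.1⟩
  have hmin := hconv.min_volume_slice_le hcpt (y₁ := t) (y₂ := s) ha hb hab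
  rw [h0] at hmin
  exact (lt_min hεt hεs).not_ge (hmin.trans hlen)

/-- If a compact convex set `S` lies in the horizontal strip `-1 ≤ y ≤ 1` and its
intersection with the x-axis has length at most `ε`, then one of the two parts of
`S` above and below the x-axis has area at most `ε`. -/
theorem convex_through_narrow_gap
    (S : Set (ℝ × ℝ)) (hcpt : IsCompact S) (hconv : Convex ℝ S)
    (hstrip : ∀ p ∈ S, -1 ≤ p.2 ∧ p.2 ≤ 1)
    (ε : ℝ) (hε : 0 < ε)
    (hlen : volume {x : ℝ | (x, (0 : ℝ)) ∈ S} ≤ ENNReal.ofReal ε) :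
    min (volume {p ∈ S | 0 ≤ p.2}) (volume {p ∈ S | p.2 ≤ 0}) ≤ ENNReal.ofReal ε :=
  convex_through_narrow_gap_general S hcpt hconv hstrip ε hlen
end

section
/- For every natural number m there exists a finite point set P ⊂ ℝ² with exactly m points lying in the interior of conv(P), together with two convex polygons with vertices in P whose union is conv(P), whose interiors are disjoint, and whose boundaries together contain all points of P. -/
/-!
Take the grid `{0, …, m + 1} × {0, 1, 2}`. Its points interior to the hull are the `m` inner
points of the middle row. The lower two rows and the upper two rows span the two halves of the
rectangle, and every point of a two-row grid lies on the boundary of the rectangle it spans,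
the inner points of a row being collinear with its end points.
-/

open Set

theorem convexHull_eq_Icc_of_subset_Icc {s : Set ℝ} {a b : ℝ} (ha : a ∈ s) (hb : b ∈ s)
    (hs : s ⊆ Icc a b) : convexHull ℝ s = Icc a b := by
  refine (convexHull_min hs (convex_Icc a b)).antisymm ?_
  rw [← segment_eq_Icc (hs ha).2, ← convexHull_pair]
  exact convexHull_mono (pair_subset ha hb)

section Product

variable {E : Type*} [AddCommGroup E] [Module ℝ E]

theorem convexHull_prod_pair (s : Set E) {a b : ℝ} (hab : a ≤ b) :
    convexHull ℝ (s ×ˢ {a, b}) = convexHull ℝ s ×ˢ Icc a b := by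
  rw [convexHull_prod, convexHull_pair, segment_eq_Icc hab]

variable [TopologicalSpace E]

theorem prod_pair_subset_frontier_convexHull (s : Set E) {a b : ℝ} (hab : a ≤ b) :
    s ×ˢ {a, b} ⊆ frontier (convexHull ℝ (s ×ˢ {a, b})) := by
  rw [convexHull_prod_pair s hab, frontier_prod_eq, ← frontier_Icc hab]
  exact subset_union_of_subset_left
    (prod_mono ((subset_convexHull ℝ s).trans subset_closure) subset_rfl) _

theorem prod_inter_interior_convexHull_prod {F : Type*} [AddCommGroup F] [Module ℝ F]
    [TopologicalSpace F] (s : Set E) (t : Set F) :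
    s ×ˢ t ∩ interior (convexHull ℝ (s ×ˢ t)) =
      (s ∩ interior (convexHull ℝ s)) ×ˢ (t ∩ interior (convexHull ℝ t)) := by
  rw [convexHull_prod, interior_prod_eq, prod_inter_prod]

end Product

noncomputable def integerPoints (n : ℕ) : Finset ℝ := (Finset.range (n + 1)).image (↑)

theorem coe_integerPoints (n : ℕ) : (integerPoints n : Set ℝ) = Nat.cast '' Iic n := by
  ext x
  simp [integerPoints]

theorem integerPoints_two_eq_union : integerPoints 2 = {0, 1} ∪ {1, 2} := by
  ext x
  simp [integerPoints, Finset.range_add_one, or_comm, or_assoc]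

theorem convexHull_integerPoints (n : ℕ) :
    convexHull ℝ (integerPoints n : Set ℝ) = Icc 0 (n : ℝ) := by
  rw [coe_integerPoints]
  refine convexHull_eq_Icc_of_subset_Icc ⟨0, n.zero_le, Nat.cast_zero⟩
    ⟨n, mem_Iic.2 le_rfl, rfl⟩ ?_
  rintro _ ⟨k, hk, rfl⟩
  exact ⟨k.cast_nonneg, Nat.cast_le.2 hk⟩

theorem ncard_integerPoints_inter_interior (n : ℕ) :
    ((integerPoints n : Set ℝ) ∩ interior (convexHull ℝ (integerPoints n : Set ℝ))).ncard =
      n - 1 := by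
  have hinner : Iic n ∩ Nat.cast ⁻¹' Ioo (0 : ℝ) n = Ioo 0 n := by
    ext k
    simp only [mem_inter_iff, mem_Iic, mem_preimage, mem_Ioo, Nat.cast_pos, Nat.cast_lt]
    omega
  rw [convexHull_integerPoints, interior_Icc, coe_integerPoints, ← image_inter_preimage, hinner,
    ncard_image_of_injective _ Nat.cast_injective, ncard_Ioo_nat, Nat.sub_zero]

/-- For every `m` there is a finite planar point set `P` with exactly `m` points
in the interior of its convex hull, which admits a convex partition into two
convex polygons with vertices in `P`: their union is `conv P`, their interiors
are disjoint, and every point of `P` lies on the boundary of one of them. -/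
theorem exists_point_set_with_m_inner_points_and_two_faces (m : ℕ) :
    ∃ (P Q₁ Q₂ : Finset (ℝ × ℝ)),
      (Q₁ : Set (ℝ × ℝ)) ⊆ (P : Set (ℝ × ℝ)) ∧ (Q₂ : Set (ℝ × ℝ)) ⊆ (P : Set (ℝ × ℝ)) ∧
      Set.ncard {p | p ∈ (P : Set (ℝ × ℝ)) ∧ p ∈ interior (convexHull ℝ (P : Set (ℝ × ℝ)))} = m ∧
      convexHull ℝ (Q₁ : Set (ℝ × ℝ)) ∪ convexHull ℝ (Q₂ : Set (ℝ × ℝ))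
        = convexHull ℝ (P : Set (ℝ × ℝ)) ∧
      Disjoint (interior (convexHull ℝ (Q₁ : Set (ℝ × ℝ))))
        (interior (convexHull ℝ (Q₂ : Set (ℝ × ℝ)))) ∧
      ∀ p ∈ (P : Set (ℝ × ℝ)),
        p ∈ frontier (convexHull ℝ (Q₁ : Set (ℝ × ℝ)))
          ∪ frontier (convexHull ℝ (Q₂ : Set (ℝ × ℝ))) := by
  set X := integerPoints (m + 1)
  have hP : X ×ˢ integerPoints 2 = X ×ˢ {0, 1} ∪ X ×ˢ {1, 2} := by
    rw [integerPoints_two_eq_union, Finset.product_union]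
  have hQ₁ := convexHull_prod_pair (X : Set ℝ) zero_le_one
  have hQ₂ := convexHull_prod_pair (X : Set ℝ) one_le_two
  refine ⟨X ×ˢ integerPoints 2, X ×ˢ {0, 1}, X ×ˢ {1, 2}, ?_, ?_, ?_, ?_, ?_, ?_⟩
  · rw [hP, Finset.coe_union]
    exact subset_union_left
  · rw [hP, Finset.coe_union]
    exact subset_union_right
  · rw [← inter_def, Finset.coe_product, prod_inter_interior_convexHull_prod, ncard_prod,
      ncard_integerPoints_inter_interior, ncard_integerPoints_inter_interior, Nat.add_sub_cancel]
    omega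
  · simp only [Finset.coe_product, Finset.coe_pair, hQ₁, hQ₂, convexHull_prod,
      convexHull_integerPoints 2, ← prod_union, Icc_union_Icc_eq_Icc zero_le_one one_le_two,
      Nat.cast_ofNat]
  · simp only [Finset.coe_product, Finset.coe_pair, hQ₁, hQ₂, interior_prod_eq, interior_Icc,
      disjoint_prod]
    exact Or.inr (Ico_disjoint_Ico_same.mono Ioo_subset_Ico_self Ioo_subset_Ico_self)
  · simp only [hP, Finset.coe_union, Finset.coe_product, Finset.coe_pair]
    exact union_subset_union (prod_pair_subset_frontier_convexHull _ zero_le_one)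
      (prod_pair_subset_frontier_convexHull _ one_le_two)
end

section
/- Let Q = {(0,0), (4,0), (4,3), (0,3), (2,2)} ⊂ ℝ². Then (a) there exist two closed convex polygons (with vertices not required to lie in Q) with pairwise disjoint interiors whose union is conv(Q) and such that no point of Q lies in the interior of either polygon; but (b) there do not exist two closed convex polygons, each with all its vertices in Q, with pairwise disjoint interiors, union equal to conv(Q), and no point of Q in the interior of either polygon. -/
/-! Write A, B, C, D for the corners (0,0), (4,0), (4,3), (0,3) of the rectangle `conv Q` and
E = (2,2). Cutting the rectangle along x = 2 gives the tiling. For a partition into `conv F` and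
`conv G` with `F, G ⊆ Q`, a vertex v of Q lies in every polygon containing a point that a line
separates from `Q \ {v}`. The midpoint (2,3) of CD thus puts C and D into one polygon, say F; then
F contains neither A nor B, as E is interior to both ACD and BCD. So the points (0,0), (0,3/2)
and (4,3/2) lie in `conv G` and put A, D and C into G, making E interior to `conv G`. -/

open Set

section

variable {E : Type*} [AddCommGroup E] [Module ℝ E]

theorem mem_of_mem_convexHull_of_lt {s t : Set E} (hst : s ⊆ t) {v x : E} (ℓ : E →ₗ[ℝ] ℝ)
    {m : ℝ} (hℓ : ∀ p ∈ t, p ≠ v → ℓ p ≤ m) (hx : x ∈ convexHull ℝ s) (hm : m < ℓ x) :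
    v ∈ s := by
  by_contra hv
  have hs : convexHull ℝ s ⊆ {p | ℓ p ≤ m} :=
    convexHull_min (fun p hp => hℓ p (hst hp) (ne_of_mem_of_not_mem hp hv))
      (convex_halfSpace_le ℓ.isLinear m)
  exact (hs hx).not_gt hm

theorem smul_add_smul_add_smul_mem_convexHull {a b c : E} {α β γ : ℝ} (hα : 0 ≤ α) (hβ : 0 ≤ β)
    (hγ : 0 ≤ γ) (h : α + β + γ = 1) : α • a + β • b + γ • c ∈ convexHull ℝ {a, b, c} := by
  have := (convex_convexHull ℝ {a, b, c}).sum_mem (t := Finset.univ) (w := ![α, β, γ])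
    (z := ![a, b, c]) (by simp [Fin.forall_fin_succ, *]) (by simp [Fin.sum_univ_three, h])
    (by simp [Fin.forall_fin_succ, subset_convexHull ℝ _ _])
  simpa [Fin.sum_univ_three, add_assoc] using this

theorem mem_interior_convexHull_of_barycentric [TopologicalSpace E] {a b c p : E}
    (α β γ : E → ℝ) (hα : Continuous α) (hβ : Continuous β) (hγ : Continuous γ)
    (hsum : ∀ q, α q + β q + γ q = 1) (hq : ∀ q, α q • a + β q • b + γ q • c = q)
    (hp : 0 < α p ∧ 0 < β p ∧ 0 < γ p) : p ∈ interior (convexHull ℝ {a, b, c}) := by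
  refine interior_maximal ?_ ((isOpen_lt continuous_const hα).inter
    ((isOpen_lt continuous_const hβ).inter (isOpen_lt continuous_const hγ))) hp
  rintro q ⟨hαq, hβq, hγq⟩
  rw [← hq q]
  exact smul_add_smul_add_smul_mem_convexHull hαq.le hβq.le hγq.le (hsum q)

end

theorem convexHull_pair_prod_pair {a b c d : ℝ} (hab : a ≤ b) (hcd : c ≤ d) :
    convexHull ℝ (({a, b} : Set ℝ) ×ˢ {c, d}) = Icc a b ×ˢ Icc c d := by
  rw [convexHull_prod, convexHull_pair, convexHull_pair, segment_eq_Icc hab, segment_eq_Icc hcd]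

namespace TilingExample

def Q : Set (ℝ × ℝ) := {(0, 0), (4, 0), (4, 3), (0, 3), (2, 2)}

theorem convexHull_Q : convexHull ℝ Q = Icc 0 4 ×ˢ Icc 0 3 := by
  refine (convexHull_min ?_ ((convex_Icc 0 4).prod (convex_Icc 0 3))).antisymm ?_
  · simp only [Q, insert_subset_iff, singleton_subset_iff, mem_prod, mem_Icc]
    norm_num
  · rw [← convexHull_pair_prod_pair (by norm_num) (by norm_num)]
    refine convexHull_mono ?_
    rintro ⟨x, y⟩ ⟨hx, hy⟩
    simp only [mem_insert_iff, mem_singleton_iff] at hx hy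
    rcases hx with rfl | rfl <;> rcases hy with rfl | rfl <;> simp [Q]

section

variable {F : Set (ℝ × ℝ)} {x : ℝ × ℝ}

theorem mem_of_lt_fst_add_snd (hF : F ⊆ Q) (hx : x ∈ convexHull ℝ F) (h : 4 < x.1 + x.2) :
    ((4 : ℝ), (3 : ℝ)) ∈ F :=
  mem_of_mem_convexHull_of_lt hF (.fst ℝ ℝ ℝ + .snd ℝ ℝ ℝ) (m := 4) (by norm_num [Q]) hx
    (by simpa using h)

theorem mem_of_pos_snd_sub_fst (hF : F ⊆ Q) (hx : x ∈ convexHull ℝ F) (h : 0 < x.2 - x.1) :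
    ((0 : ℝ), (3 : ℝ)) ∈ F :=
  mem_of_mem_convexHull_of_lt hF (.snd ℝ ℝ ℝ - .fst ℝ ℝ ℝ) (m := 0) (by norm_num [Q]) hx
    (by simpa using h)

theorem mem_of_fst_add_snd_lt (hF : F ⊆ Q) (hx : x ∈ convexHull ℝ F) (h : x.1 + x.2 < 3) :
    ((0 : ℝ), (0 : ℝ)) ∈ F :=
  mem_of_mem_convexHull_of_lt hF (-(.fst ℝ ℝ ℝ + .snd ℝ ℝ ℝ)) (m := -3) (by norm_num [Q]) hx
    (by simp only [LinearMap.neg_apply, LinearMap.add_apply, LinearMap.fst_apply,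
      LinearMap.snd_apply]; linarith)

theorem mem_of_lt_fst_sub_snd (hF : F ⊆ Q) (hx : x ∈ convexHull ℝ F) (h : 1 < x.1 - x.2) :
    ((4 : ℝ), (0 : ℝ)) ∈ F :=
  mem_of_mem_convexHull_of_lt hF (.fst ℝ ℝ ℝ - .snd ℝ ℝ ℝ) (m := 1) (by norm_num [Q]) hx
    (by simpa using h)

theorem mem_interior_of_triangle_ACD (hA : ((0 : ℝ), (0 : ℝ)) ∈ F)
    (hC : ((4 : ℝ), (3 : ℝ)) ∈ F) (hD : ((0 : ℝ), (3 : ℝ)) ∈ F) :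
    ((2 : ℝ), (2 : ℝ)) ∈ interior (convexHull ℝ F) :=
  interior_mono (convexHull_mono (by simp [insert_subset_iff, *]))
    (mem_interior_convexHull_of_barycentric (a := (0, 0)) (b := (4, 3)) (c := (0, 3))
      (fun q => 1 - q.2 / 3) (fun q => q.1 / 4) (fun q => q.2 / 3 - q.1 / 4)
      (by fun_prop) (by fun_prop) (by fun_prop) (fun q => by ring)
      (fun q => by ext <;> simp; ring) (by norm_num))

theorem mem_interior_of_triangle_BCD (hB : ((4 : ℝ), (0 : ℝ)) ∈ F)
    (hC : ((4 : ℝ), (3 : ℝ)) ∈ F) (hD : ((0 : ℝ), (3 : ℝ)) ∈ F) :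
    ((2 : ℝ), (2 : ℝ)) ∈ interior (convexHull ℝ F) :=
  interior_mono (convexHull_mono (by simp [insert_subset_iff, *]))
    (mem_interior_convexHull_of_barycentric (a := (4, 0)) (b := (4, 3)) (c := (0, 3))
      (fun q => 1 - q.2 / 3) (fun q => q.1 / 4 + q.2 / 3 - 1) (fun q => 1 - q.1 / 4)
      (by fun_prop) (by fun_prop) (by fun_prop) (fun q => by ring)
      (fun q => by ext <;> simp <;> ring) (by norm_num))

end

theorem mem_interior_of_covers_rectangle_of_mem {F G : Set (ℝ × ℝ)} (hF : F ⊆ Q) (hG : G ⊆ Q)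
    (hcover : Icc 0 4 ×ˢ Icc 0 3 ⊆ convexHull ℝ F ∪ convexHull ℝ G)
    (htop : ((2 : ℝ), (3 : ℝ)) ∈ convexHull ℝ F) :
    ((2 : ℝ), (2 : ℝ)) ∈ interior (convexHull ℝ F) ∨
      ((2 : ℝ), (2 : ℝ)) ∈ interior (convexHull ℝ G) := by
  have hC : ((4 : ℝ), (3 : ℝ)) ∈ F := mem_of_lt_fst_add_snd hF htop (by norm_num)
  have hD : ((0 : ℝ), (3 : ℝ)) ∈ F := mem_of_pos_snd_sub_fst hF htop (by norm_num)
  by_cases hA : ((0 : ℝ), (0 : ℝ)) ∈ F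
  · exact .inl (mem_interior_of_triangle_ACD hA hC hD)
  by_cases hB : ((4 : ℝ), (0 : ℝ)) ∈ F
  · exact .inl (mem_interior_of_triangle_BCD hB hC hD)
  refine .inr (mem_interior_of_triangle_ACD ?_ ?_ ?_)
  · rcases hcover (by norm_num : ((0 : ℝ), (0 : ℝ)) ∈ Icc 0 4 ×ˢ Icc 0 3) with h | h
    · exact absurd (mem_of_fst_add_snd_lt hF h (by norm_num)) hA
    · exact mem_of_fst_add_snd_lt hG h (by norm_num)
  · rcases hcover (by norm_num : ((4 : ℝ), (3 / 2 : ℝ)) ∈ Icc 0 4 ×ˢ Icc 0 3) with h | h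
    · exact absurd (mem_of_lt_fst_sub_snd hF h (by norm_num)) hB
    · exact mem_of_lt_fst_add_snd hG h (by norm_num)
  · rcases hcover (by norm_num : ((0 : ℝ), (3 / 2 : ℝ)) ∈ Icc 0 4 ×ˢ Icc 0 3) with h | h
    · exact absurd (mem_of_fst_add_snd_lt hF h (by norm_num)) hA
    · exact mem_of_pos_snd_sub_fst hG h (by norm_num)

theorem mem_interior_of_covers_rectangle {F G : Set (ℝ × ℝ)} (hF : F ⊆ Q) (hG : G ⊆ Q)
    (hcover : Icc 0 4 ×ˢ Icc 0 3 ⊆ convexHull ℝ F ∪ convexHull ℝ G) :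
    ((2 : ℝ), (2 : ℝ)) ∈ interior (convexHull ℝ F) ∨
      ((2 : ℝ), (2 : ℝ)) ∈ interior (convexHull ℝ G) := by
  rcases hcover (by norm_num : ((2 : ℝ), (3 : ℝ)) ∈ Icc 0 4 ×ˢ Icc 0 3) with h | h
  · exact mem_interior_of_covers_rectangle_of_mem hF hG hcover h
  · rw [union_comm] at hcover
    exact (mem_interior_of_covers_rectangle_of_mem hG hF hcover h).symm

end TilingExample

/-- For `Q = {(0,0), (4,0), (4,3), (0,3), (2,2)}`:
(a) there is a convex *tiling* of `conv Q` by two closed convex polygons (vertices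
arbitrary) with disjoint interiors, no point of `Q` interior to either polygon;
(b) there is no such *partition* by two convex polygons all of whose vertices lie
in `Q`. -/
theorem tiling_two_but_partition_needs_three :
    let Q : Set (ℝ × ℝ) := {(0, 0), (4, 0), (4, 3), (0, 3), (2, 2)}
    (∃ F₁ F₂ : Finset (ℝ × ℝ),
        convexHull ℝ (F₁ : Set (ℝ × ℝ)) ∪ convexHull ℝ (F₂ : Set (ℝ × ℝ)) = convexHull ℝ Q ∧
        Disjoint (interior (convexHull ℝ (F₁ : Set (ℝ × ℝ))))
          (interior (convexHull ℝ (F₂ : Set (ℝ × ℝ)))) ∧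
        ∀ p ∈ Q, p ∉ interior (convexHull ℝ (F₁ : Set (ℝ × ℝ))) ∧
          p ∉ interior (convexHull ℝ (F₂ : Set (ℝ × ℝ)))) ∧
    ¬ (∃ F₁ F₂ : Finset (ℝ × ℝ), (F₁ : Set (ℝ × ℝ)) ⊆ Q ∧ (F₂ : Set (ℝ × ℝ)) ⊆ Q ∧
        convexHull ℝ (F₁ : Set (ℝ × ℝ)) ∪ convexHull ℝ (F₂ : Set (ℝ × ℝ)) = convexHull ℝ Q ∧
        Disjoint (interior (convexHull ℝ (F₁ : Set (ℝ × ℝ))))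
          (interior (convexHull ℝ (F₂ : Set (ℝ × ℝ)))) ∧
        ∀ p ∈ Q, p ∉ interior (convexHull ℝ (F₁ : Set (ℝ × ℝ))) ∧
          p ∉ interior (convexHull ℝ (F₂ : Set (ℝ × ℝ)))) := by
  intro Q
  have hQ : convexHull ℝ Q = Icc 0 4 ×ˢ Icc 0 3 := TilingExample.convexHull_Q
  refine ⟨⟨{0, 2} ×ˢ {0, 3}, {2, 4} ×ˢ {0, 3}, ?_⟩, ?_⟩
  · simp only [Finset.coe_product, Finset.coe_insert, Finset.coe_singleton,
      convexHull_pair_prod_pair (by norm_num : (0 : ℝ) ≤ 2) (by norm_num : (0 : ℝ) ≤ 3),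
      convexHull_pair_prod_pair (by norm_num : (2 : ℝ) ≤ 4) (by norm_num : (0 : ℝ) ≤ 3),
      interior_prod_eq, interior_Icc]
    refine ⟨?_, (Ioo_disjoint_Ioo.2 (by norm_num)).set_prod_left _ _, by simp [Q]⟩
    rw [hQ, ← union_prod, Icc_union_Icc_eq_Icc (by norm_num) (by norm_num)]
  · rintro ⟨F₁, F₂, hF₁, hF₂, hunion, -, hint⟩
    rcases TilingExample.mem_interior_of_covers_rectangle hF₁ hF₂ (hQ ▸ hunion.ge) with h | h
    exacts [(hint _ (by simp [Q])).1 h, (hint _ (by simp [Q])).2 h]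
end

section
/- Let P ⊂ ℝ² be a finite point set, let s be the minimum number of pairwise non-crossing segments (degenerate point-segments allowed) needed to cover P, and let ℓ be the minimum number of lines needed to cover P. Then ℓ ≤ s and s ≤ ℓ². -/
private lemma param_unique {B : ℝ × ℝ} (hB : B ≠ 0) {A : ℝ × ℝ} {t t' : ℝ}
    (h : A + t • B = A + t' • B) : t = t' := by
  have h2 : (t - t') • B = 0 := by
    rw [sub_smul, add_left_cancel h, sub_self]
  exact sub_eq_zero.1 ((smul_eq_zero.1 h2).resolve_right hB)

private lemma mem_seg_param {A B : ℝ × ℝ} {u v t : ℝ} (h1 : u ≤ t) (h2 : t ≤ v) :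
    A + t • B ∈ segment ℝ (A + u • B) (A + v • B) := by
  have ht : t ∈ segment ℝ u v := by
    rw [segment_eq_Icc (le_trans h1 h2)]; exact ⟨h1, h2⟩
  obtain ⟨θ1, θ2, h01, h02, hsum, ht⟩ := ht
  refine ⟨θ1, θ2, h01, h02, hsum, ?_⟩
  have hθ1 : θ1 = 1 - θ2 := by linarith
  subst hθ1
  have htt : t = (1 - θ2) * u + θ2 * v := by
    rw [← ht]; simp [smul_eq_mul]
  rw [htt]
  module

private lemma seg_param_inv {A B x : ℝ × ℝ} {u v : ℝ} (huv : u ≤ v)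
    (hx : x ∈ segment ℝ (A + u • B) (A + v • B)) :
    ∃ t, u ≤ t ∧ t ≤ v ∧ x = A + t • B := by
  obtain ⟨θ1, θ2, h01, h02, hsum, hx⟩ := hx
  have hθ1 : θ1 = 1 - θ2 := by linarith
  subst hθ1
  refine ⟨(1 - θ2) * u + θ2 * v, ?_, ?_, ?_⟩
  · nlinarith [mul_nonneg h02 (sub_nonneg.2 huv)]
  · nlinarith [mul_nonneg h01 (sub_nonneg.2 huv)]
  · rw [← hx]
    module

private lemma line_sub {A B A' B' : ℝ × ℝ} (hB : B ≠ 0) {t1 t2 s1 s2 : ℝ}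
    (ht : t1 ≠ t2) (h1 : A + t1 • B = A' + s1 • B') (h2 : A + t2 • B = A' + s2 • B') :
    {z : ℝ × ℝ | ∃ t : ℝ, z = A + t • B} ⊆ {z : ℝ × ℝ | ∃ t : ℝ, z = A' + t • B'} := by
  have hkey : (t2 - t1) • B = (s2 - s1) • B' := by
    linear_combination (norm := module) h2 - h1
  have ht' : t2 - t1 ≠ 0 := sub_ne_zero.2 (Ne.symm ht)
  have hBeq : B = ((t2 - t1)⁻¹ * (s2 - s1)) • B' := by
    rw [mul_smul, ← hkey, inv_smul_smul₀ ht']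
  rintro z ⟨t, rfl⟩
  refine ⟨s1 + (t - t1) * ((t2 - t1)⁻¹ * (s2 - s1)), ?_⟩
  linear_combination (norm := module) h1 + (t - t1) • hBeq

private lemma line_eq {A B A' B' : ℝ × ℝ} (hB : B ≠ 0) (hB' : B' ≠ 0) {t1 t2 s1 s2 : ℝ}
    (ht : t1 ≠ t2) (h1 : A + t1 • B = A' + s1 • B') (h2 : A + t2 • B = A' + s2 • B') :
    {z : ℝ × ℝ | ∃ t : ℝ, z = A + t • B} = {z : ℝ × ℝ | ∃ t : ℝ, z = A' + t • B'} := by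
  have hs : s1 ≠ s2 := by
    intro h
    subst h
    exact ht (param_unique hB (h1.trans h2.symm))
  exact Set.Subset.antisymm (line_sub hB ht h1 h2) (line_sub hB' hs h1.symm h2.symm)

/-- Let `s` be the minimum number of pairwise non-crossing segments needed to
cover a finite planar point set `P`, and `ℓ` the minimum number of lines needed
to cover `P`. Then `ℓ ≤ s ≤ ℓ²`. -/
theorem noncrossing_segment_number_vs_line_number
    (P : Set (ℝ × ℝ)) (hP : P.Finite) (s ℓ : ℕ)
    (hs : IsLeast {m : ℕ | ∃ g : Fin m → (ℝ × ℝ) × (ℝ × ℝ),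
      P ⊆ (⋃ i, segment ℝ (g i).1 (g i).2) ∧
      ∀ i j, i ≠ j →
        Disjoint (openSegment ℝ (g i).1 (g i).2) (openSegment ℝ (g j).1 (g j).2)} s)
    (hℓ : IsLeast {m : ℕ | ∃ a b : Fin m → ℝ × ℝ, (∀ i, b i ≠ 0) ∧
      P ⊆ ⋃ i, {x : ℝ × ℝ | ∃ t : ℝ, x = a i + t • b i}} ℓ) :
    ℓ ≤ s ∧ s ≤ ℓ ^ 2 := by
  classical
  obtain ⟨⟨g, hgcov, hgdisj⟩, hsmin⟩ := hs
  obtain ⟨⟨a, b, hb, hcov⟩, hlmin⟩ := hℓ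
  constructor
  · apply hlmin
    refine ⟨fun i => (g i).1,
      fun i => if (g i).2 - (g i).1 = 0 then (1, 0) else (g i).2 - (g i).1, ?_, ?_⟩
    · intro i
      dsimp only
      split
      · simp
      · assumption
    · intro x hx
      obtain ⟨S, ⟨i, rfl⟩, hxS⟩ := hgcov hx
      simp only [Set.mem_iUnion, Set.mem_setOf_eq]
      refine ⟨i, ?_⟩
      obtain ⟨θ1, θ2, h01, h02, hsum, hxe⟩ := hxS
      have hθ1 : θ1 = 1 - θ2 := by linarith
      subst hθ1
      by_cases hd : (g i).2 - (g i).1 = 0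
      · refine ⟨0, ?_⟩
        have h2 : (g i).2 = (g i).1 := sub_eq_zero.1 hd
        rw [if_pos hd, ← hxe, h2]
        module
      · refine ⟨θ2, ?_⟩
        rw [if_neg hd, ← hxe]
        module
  · rcases Nat.eq_zero_or_pos ℓ with hl0 | hlpos
    · subst hl0
      have hPe : P = ∅ := by
        have := hcov
        simp only [Set.iUnion_of_empty] at this
        exact Set.subset_empty_iff.1 this
      have : s ≤ 0 := hsmin ⟨Fin.elim0, by simp [hPe], fun i => i.elim0⟩
      omega
    set L : Fin ℓ → Set (ℝ × ℝ) := fun i => {x : ℝ × ℝ | ∃ t : ℝ, x = a i + t • b i} with hLdef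
    -- least index
    have hidx0 : ∀ p : ℝ × ℝ, ∃ i : Fin ℓ, p ∈ P → p ∈ L i ∧ ∀ j, p ∈ L j → i ≤ j := by
      intro p
      by_cases hp : p ∈ P
      · have hne : (Finset.univ.filter (fun i => p ∈ L i)).Nonempty := by
          obtain ⟨S, ⟨i, rfl⟩, hxS⟩ := hcov hp
          exact ⟨i, by simp [hxS]⟩
        refine ⟨(Finset.univ.filter (fun i => p ∈ L i)).min' hne, fun _ => ⟨?_, ?_⟩⟩
        · have := Finset.min'_mem _ hne
          simpa using this
        · intro j hj
          exact Finset.min'_le _ _ (by simpa using hj)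
      · exact ⟨⟨0, hlpos⟩, fun h => absurd h hp⟩
    choose idx hidx using hidx0
    -- parameter of a point on a line
    have hτ0 : ∀ (i : Fin ℓ) (p : ℝ × ℝ), ∃ t : ℝ, p ∈ L i → p = a i + t • b i := by
      intro i p
      by_cases h : p ∈ L i
      · exact ⟨h.choose, fun _ => h.choose_spec⟩
      · exact ⟨0, fun h' => absurd h' h⟩
    choose τ hτ using hτ0
    have hτu : ∀ (i : Fin ℓ) {t : ℝ} {p : ℝ × ℝ}, p = a i + t • b i → p ∈ L i → τ i p = t := by
      intro i t p hpt hpL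
      exact param_unique (hb i) ((hτ i p hpL).symm.trans hpt)
    -- region counting
    set reg : Fin ℓ → ℝ → ℕ := fun i t =>
      (Finset.univ.filter (fun j => j ≠ i ∧ L j ≠ L i ∧ ∃ c : ℝ, c < t ∧ a i + c • b i ∈ L j)).card
      with hregdef
    have hregmono : ∀ (i : Fin ℓ) {t t' : ℝ}, t ≤ t' → reg i t ≤ reg i t' := by
      intro i t t' htt
      apply Finset.card_le_card
      intro j hj
      simp only [Finset.mem_filter] at hj ⊢
      obtain ⟨hu, h1, h2, c, hc, hc2⟩ := hj
      exact ⟨hu, h1, h2, c, lt_of_lt_of_le hc htt, hc2⟩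
    have hreglt : ∀ (i : Fin ℓ) (t : ℝ), reg i t < ℓ := by
      intro i t
      have hsub : (Finset.univ.filter
          (fun j => j ≠ i ∧ L j ≠ L i ∧ ∃ c : ℝ, c < t ∧ a i + c • b i ∈ L j))
          ⊆ Finset.univ.erase i := by
        intro j hj
        simp only [Finset.mem_filter] at hj
        exact Finset.mem_erase.2 ⟨hj.2.1, Finset.mem_univ j⟩
      calc reg i t ≤ (Finset.univ.erase i).card := Finset.card_le_card hsub
        _ = ℓ - 1 := by rw [Finset.card_erase_of_mem (Finset.mem_univ i)]; simp
        _ < ℓ := by omega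
    have hnocut : ∀ (i : Fin ℓ) {u v : ℝ}, reg i u = reg i v → u ≤ v →
        ∀ j : Fin ℓ, j ≠ i → L j ≠ L i → ∀ c : ℝ, u ≤ c → c < v →
        a i + c • b i ∈ L j → False := by
      intro i u v hregeq huv j hji hLji c hc1 hc2 hcL
      have hsubs : (Finset.univ.filter
          (fun j => j ≠ i ∧ L j ≠ L i ∧ ∃ c : ℝ, c < u ∧ a i + c • b i ∈ L j))
          ⊆ Finset.univ.filter
          (fun j => j ≠ i ∧ L j ≠ L i ∧ ∃ c : ℝ, c < v ∧ a i + c • b i ∈ L j) := by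
        intro j' hj'
        simp only [Finset.mem_filter] at hj' ⊢
        obtain ⟨hu, h1, h2, c', hc', hc2'⟩ := hj'
        exact ⟨hu, h1, h2, c', lt_of_lt_of_le hc' huv, hc2'⟩
      have hfeq := Finset.eq_of_subset_of_card_le hsubs (le_of_eq hregeq.symm)
      have hjv : j ∈ Finset.univ.filter
          (fun j => j ≠ i ∧ L j ≠ L i ∧ ∃ c : ℝ, c < v ∧ a i + c • b i ∈ L j) := by
        simp only [Finset.mem_filter]
        exact ⟨Finset.mem_univ j, hji, hLji, c, hc2, hcL⟩
      rw [← hfeq] at hjv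
      simp only [Finset.mem_filter] at hjv
      obtain ⟨-, -, -, c', hc'u, hc'L⟩ := hjv
      have hcc : c' ≠ c := by intro h; subst h; linarith
      have heq := line_eq (hb i) (hb j) hcc (hτ j _ hc'L) (hτ j _ hcL)
      refine hLji ?_
      simp only [hLdef]
      exact heq.symm
    set key : ℝ × ℝ → Fin ℓ × ℕ := fun p => (idx p, reg (idx p) (τ (idx p) p)) with hkeydef
    set K : Finset (Fin ℓ × ℕ) := hP.toFinset.image key with hKdef
    set G : Fin ℓ × ℕ → Finset (ℝ × ℝ) := fun κ => hP.toFinset.filter (fun p => key p = κ) with hGdef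
    set T : Fin ℓ × ℕ → Finset ℝ := fun κ => (G κ).image (fun p => τ κ.1 p) with hTdef
    have hTne : ∀ κ ∈ K, (T κ).Nonempty := by
      intro κ hκ
      obtain ⟨p, hp, hpk⟩ := Finset.mem_image.1 hκ
      exact ⟨τ κ.1 p, Finset.mem_image.2 ⟨p, Finset.mem_filter.2 ⟨hp, hpk⟩, rfl⟩⟩
    set u : Fin ℓ × ℕ → ℝ := fun κ => if h : (T κ).Nonempty then (T κ).min' h else 0 with hudef
    set v : Fin ℓ × ℕ → ℝ := fun κ => if h : (T κ).Nonempty then (T κ).max' h else 0 with hvdef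
    have huv : ∀ κ ∈ K, u κ ≤ v κ := by
      intro κ hκ
      obtain ⟨t0, ht0⟩ := hTne κ hκ
      rw [hudef, hvdef]
      simp only [dif_pos (hTne κ hκ)]
      exact le_trans (Finset.min'_le _ _ ht0) (Finset.le_max' _ _ ht0)
    have hwitu : ∀ κ ∈ K, ∃ p, p ∈ P ∧ key p = κ ∧ τ κ.1 p = u κ ∧ p = a κ.1 + u κ • b κ.1 := by
      intro κ hκ
      have hmem : u κ ∈ T κ := by
        rw [hudef]
        simp only [dif_pos (hTne κ hκ)]
        exact Finset.min'_mem _ _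
      obtain ⟨p, hpG, hpτ⟩ := Finset.mem_image.1 hmem
      obtain ⟨hpP, hpk⟩ := Finset.mem_filter.1 hpG
      have hpP' : p ∈ P := hP.mem_toFinset.1 hpP
      have hi : idx p = κ.1 := by rw [← hpk]
      refine ⟨p, hpP', hpk, hpτ, ?_⟩
      have := hτ κ.1 p (by rw [← hi]; exact (hidx p hpP').1)
      rw [hpτ] at this
      exact this
    have hwitv : ∀ κ ∈ K, ∃ p, p ∈ P ∧ key p = κ ∧ τ κ.1 p = v κ ∧ p = a κ.1 + v κ • b κ.1 := by
      intro κ hκ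
      have hmem : v κ ∈ T κ := by
        rw [hvdef]
        simp only [dif_pos (hTne κ hκ)]
        exact Finset.max'_mem _ _
      obtain ⟨p, hpG, hpτ⟩ := Finset.mem_image.1 hmem
      obtain ⟨hpP, hpk⟩ := Finset.mem_filter.1 hpG
      have hpP' : p ∈ P := hP.mem_toFinset.1 hpP
      have hi : idx p = κ.1 := by rw [← hpk]
      refine ⟨p, hpP', hpk, hpτ, ?_⟩
      have := hτ κ.1 p (by rw [← hi]; exact (hidx p hpP').1)
      rw [hpτ] at this
      exact this
    have hbnd : ∀ κ, ∀ p, p ∈ P → key p = κ → u κ ≤ τ κ.1 p ∧ τ κ.1 p ≤ v κ := by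
      intro κ p hp hpk
      have hmem : τ κ.1 p ∈ T κ :=
        Finset.mem_image.2 ⟨p, Finset.mem_filter.2 ⟨hP.mem_toFinset.2 hp, hpk⟩, rfl⟩
      have hne : (T κ).Nonempty := ⟨_, hmem⟩
      constructor
      · rw [hudef]; simp only [dif_pos hne]; exact Finset.min'_le _ _ hmem
      · rw [hvdef]; simp only [dif_pos hne]; exact Finset.le_max' _ _ hmem
    have hregu : ∀ κ ∈ K, reg κ.1 (u κ) = κ.2 := by
      intro κ hκ
      obtain ⟨p, hpP, hpk, hpτ, -⟩ := hwitu κ hκ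
      have hi : idx p = κ.1 := by rw [← hpk]
      have h2 : reg (idx p) (τ (idx p) p) = κ.2 := by rw [← hpk]
      rw [hi, hpτ] at h2
      exact h2
    have hregv : ∀ κ ∈ K, reg κ.1 (v κ) = κ.2 := by
      intro κ hκ
      obtain ⟨p, hpP, hpk, hpτ, -⟩ := hwitv κ hκ
      have hi : idx p = κ.1 := by rw [← hpk]
      have h2 : reg (idx p) (τ (idx p) p) = κ.2 := by rw [← hpk]
      rw [hi, hpτ] at h2
      exact h2
    have horder : ∀ κ ∈ K, ∀ κ' ∈ K, κ.1 = κ'.1 → κ.2 < κ'.2 → v κ < u κ' := by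
      intro κ hκ κ' hκ' hij hkk
      by_contra hle
      push_neg at hle
      have h1 := hregu κ' hκ'
      have h2 := hregv κ hκ
      have h3 := hregmono κ.1 hle
      rw [hij] at h3 h2
      omega
    -- the disjointness core
    have hdisj : ∀ κ ∈ K, ∀ κ' ∈ K, κ ≠ κ' → ∀ x : ℝ × ℝ,
        x ∈ openSegment ℝ (a κ.1 + u κ • b κ.1) (a κ.1 + v κ • b κ.1) →
        x ∈ openSegment ℝ (a κ'.1 + u κ' • b κ'.1) (a κ'.1 + v κ' • b κ'.1) → False := by
      intro κ hκ κ' hκ' hne x hxo hxo'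
      obtain ⟨t, htu, htv, hxt⟩ := seg_param_inv (huv κ hκ) (openSegment_subset_segment ℝ _ _ hxo)
      obtain ⟨t', ht'u, ht'v, hxt'⟩ :=
        seg_param_inv (huv κ' hκ') (openSegment_subset_segment ℝ _ _ hxo')
      by_cases hij : κ.1 = κ'.1
      · have hkk : κ.2 ≠ κ'.2 := fun h => hne (Prod.ext hij h)
        have htt : t = t' := by
          refine param_unique (hb κ.1) (hxt.symm.trans ?_)
          rw [hxt', hij]
        rcases Nat.lt_or_ge κ.2 κ'.2 with h | h
        · have := horder κ hκ κ' hκ' hij h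
          linarith
        · have := horder κ' hκ' κ hκ hij.symm (lt_of_le_of_ne h (Ne.symm hkk))
          linarith
      · by_cases hLL : L κ.1 = L κ'.1
        · obtain ⟨p, hpP, hpk, -, -⟩ := hwitu κ hκ
          obtain ⟨q, hqP, hqk, -, -⟩ := hwitu κ' hκ'
          have hip : idx p = κ.1 := by rw [← hpk]
          have hiq : idx q = κ'.1 := by rw [← hqk]
          have h1 : κ.1 ≤ κ'.1 := by
            rw [← hip, ← hiq]
            exact (hidx p hpP).2 _ (by rw [hiq, ← hLL, ← hip]; exact (hidx p hpP).1)
          have h2 : κ'.1 ≤ κ.1 := by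
            rw [← hip, ← hiq]
            exact (hidx q hqP).2 _ (by rw [hip, hLL, ← hiq]; exact (hidx q hqP).1)
          exact hij (le_antisymm h1 h2)
        · have hside : ∀ κ0, κ0 ∈ K → ∀ j : Fin ℓ, j ≠ κ0.1 → L j ≠ L κ0.1 →
              ∀ t0 : ℝ, u κ0 ≤ t0 → t0 ≤ v κ0 → x = a κ0.1 + t0 • b κ0.1 →
              x ∈ openSegment ℝ (a κ0.1 + u κ0 • b κ0.1) (a κ0.1 + v κ0 • b κ0.1) →
              x ∈ L j → x ∈ P ∧ idx x = κ0.1 := by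
            intro κ0 hκ0 j hj hLj t0 ht0u ht0v hxeq hxop hxLj
            have hregeq : reg κ0.1 (u κ0) = reg κ0.1 (v κ0) :=
              (hregu κ0 hκ0).trans (hregv κ0 hκ0).symm
            rcases lt_or_eq_of_le ht0v with hlt | heq
            · exact absurd (hxeq ▸ hxLj) (fun hc =>
                hnocut κ0.1 hregeq (huv κ0 hκ0) j hj hLj t0 ht0u hlt hc)
            · rcases lt_or_eq_of_le (le_trans ht0u (le_of_eq heq) : u κ0 ≤ v κ0) with huvlt | huveq
              · have hxend : x = a κ0.1 + v κ0 • b κ0.1 := by rw [hxeq, heq]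
                rw [hxend, right_mem_openSegment_iff] at hxop
                exact absurd (param_unique (hb κ0.1) hxop) (ne_of_lt huvlt)
              · obtain ⟨p, hpP, hpk, hpτ, hpe⟩ := hwitu κ0 hκ0
                have hxp : x = p := by rw [hxeq, heq, ← huveq, ← hpe]
                subst hxp
                exact ⟨hpP, by rw [← hpk]⟩
          have hxLj' : x ∈ L κ'.1 := ⟨t', hxt'⟩
          have hxLi : x ∈ L κ.1 := ⟨t, hxt⟩
          have h1 := hside κ hκ κ'.1 (fun h => hij h.symm) (fun h => hLL h.symm)
            t htu htv hxt hxo hxLj'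
          have h2 := hside κ' hκ' κ.1 hij hLL t' ht'u ht'v hxt' hxo' hxLi
          exact hij (h1.2.symm.trans h2.2)
    have hKcard : K.card ≤ ℓ ^ 2 := by
      have hsub : K ⊆ Finset.univ ×ˢ Finset.range ℓ := by
        intro κ hκ
        obtain ⟨p, hp, hpk⟩ := Finset.mem_image.1 hκ
        rw [Finset.mem_product]
        refine ⟨Finset.mem_univ _, Finset.mem_range.2 ?_⟩
        rw [← hpk]
        exact hreglt (idx p) _
      calc K.card ≤ (Finset.univ ×ˢ Finset.range ℓ).card := Finset.card_le_card hsub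
        _ = ℓ * ℓ := by rw [Finset.card_product]; simp
        _ = ℓ ^ 2 := (sq ℓ).symm
    refine le_trans (hsmin ?_) hKcard
    set e := K.equivFin with hedef
    refine ⟨fun n => (a ((e.symm n).1.1) + u ((e.symm n).1) • b ((e.symm n).1.1),
                      a ((e.symm n).1.1) + v ((e.symm n).1) • b ((e.symm n).1.1)), ?_, ?_⟩
    · intro p hp
      have hkp : key p ∈ K := Finset.mem_image.2 ⟨p, hP.mem_toFinset.2 hp, rfl⟩
      refine Set.mem_iUnion.2 ⟨e ⟨key p, hkp⟩, ?_⟩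
      simp only [Equiv.symm_apply_apply]
      have hbd := hbnd (key p) p hp rfl
      have hpe : p = a ((key p).1) + τ ((key p).1) p • b ((key p).1) :=
        hτ _ p ((hidx p hp).1)
      have hmem := mem_seg_param (A := a ((key p).1)) (B := b ((key p).1)) hbd.1 hbd.2
      rw [← hpe] at hmem
      exact hmem
    · intro n n' hnn
      rw [Set.disjoint_left]
      intro x hx hx'
      exact hdisj ((e.symm n) : Fin ℓ × ℕ) (e.symm n).2 ((e.symm n') : Fin ℓ × ℕ) (e.symm n').2
        (fun h => hnn (e.symm.injective (Subtype.ext h))) x hx hx'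
end
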